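/- arXiv:2206.15379 — 4 statements merged into one kernel-verified Lean document; each statement's English description precedes it below -/
import Mathlib

section
/- Let S be the unit ball in R^n, ε ∈ (0,1), and let N = {x ∈ S : √n x_i / ε ∈ Z for all i} be the ε-grid net. Then for any n×n real matrix A, ‖A‖₂ ≤ (1-ε)^{-2} sup_{x,y ∈ N} |x^T A y|. -/
/-!
Rounding every coordinate of `x` toward zero to a multiple of `ε / √n` stays in the unit ball
and moves `x` by at most `ε`, so the grid points form an `ε`-net of the ball. For any `ε`-net
`s`, writing a unit vector as `u + (x - u)` with `u ∈ s` gives `‖T‖ ≤ sup_{u ∈ s} ‖T u‖ + ε ‖T‖`.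
Applying this once to `T` and once to each functional `⟪·, T u⟫` yields the factor `(1 - ε)⁻²`.
-/

section Net

variable {𝕜 E F : Type*}

def IsUnitBallNet [SeminormedAddCommGroup E] (s : Set E) (ε : ℝ) : Prop :=
  ∀ x : E, ‖x‖ ≤ 1 → ∃ u ∈ s, ‖x - u‖ ≤ ε

theorem IsUnitBallNet.mono [SeminormedAddCommGroup E] {s t : Set E} {ε : ℝ}
    (hs : IsUnitBallNet s ε) (hst : s ⊆ t) : IsUnitBallNet t ε := fun x hx =>
  let ⟨u, hu, hxu⟩ := hs x hx
  ⟨u, hst hu, hxu⟩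

theorem ContinuousLinearMap.opNorm_le_of_isUnitBallNet [NontriviallyNormedField 𝕜]
    [NormedAlgebra ℝ 𝕜] [SeminormedAddCommGroup E] [NormedSpace 𝕜 E]
    [SeminormedAddCommGroup F] [NormedSpace 𝕜 F] (T : E →L[𝕜] F) {s : Set E} {ε C : ℝ}
    (hε : ε < 1) (hs : IsUnitBallNet s ε) (hC : ∀ u ∈ s, ‖T u‖ ≤ C) :
    ‖T‖ ≤ (1 - ε)⁻¹ * C := by
  obtain ⟨u₀, hu₀, hεu₀⟩ := hs 0 (by simp)
  have hC₀ : 0 ≤ C := (norm_nonneg _).trans (hC u₀ hu₀)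
  have hε₀ : 0 ≤ ε := (norm_nonneg _).trans hεu₀
  have hbound : ‖T‖ ≤ C + ε * ‖T‖ := by
    refine T.opNorm_le_of_unit_norm (by positivity) fun x hx => ?_
    obtain ⟨u, hu, hxu⟩ := hs x hx.le
    calc ‖T x‖ = ‖T u + T (x - u)‖ := by rw [← map_add, add_sub_cancel]
      _ ≤ ‖T u‖ + ‖T‖ * ‖x - u‖ := norm_add_le_of_le le_rfl (T.le_opNorm _)
      _ ≤ C + ε * ‖T‖ := by
        rw [mul_comm ε]
        exact add_le_add (hC u hu) (mul_le_mul_of_nonneg_left hxu T.opNorm_nonneg)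
  rw [le_inv_mul_iff₀ (by linarith)]
  linarith

open scoped InnerProductSpace in
theorem ContinuousLinearMap.opNorm_le_of_inner_isUnitBallNet [RCLike 𝕜]
    [NormedAddCommGroup E] [InnerProductSpace 𝕜 E] [NormedAddCommGroup F]
    [InnerProductSpace 𝕜 F] (T : E →L[𝕜] F) {s : Set E} {t : Set F} {ε C : ℝ}
    (hε : ε < 1) (hs : IsUnitBallNet s ε) (ht : IsUnitBallNet t ε)
    (hC : ∀ u ∈ s, ∀ v ∈ t, ‖⟪v, T u⟫_𝕜‖ ≤ C) :
    ‖T‖ ≤ (1 - ε)⁻¹ ^ 2 * C := by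
  have hTs : ∀ u ∈ s, ‖T u‖ ≤ (1 - ε)⁻¹ * C := fun u hu => by
    rw [← innerSL_apply_norm 𝕜]
    refine (innerSL 𝕜 (T u)).opNorm_le_of_isUnitBallNet hε ht fun v hv => ?_
    rw [innerSL_apply_apply, norm_inner_symm]
    exact hC u hu v hv
  calc ‖T‖ ≤ (1 - ε)⁻¹ * ((1 - ε)⁻¹ * C) := T.opNorm_le_of_isUnitBallNet hε hs hTs
    _ = (1 - ε)⁻¹ ^ 2 * C := by ring

end Net

section Grid

theorem exists_int_abs_le_abs_sub_le_one (t : ℝ) : ∃ z : ℤ, |(z : ℝ)| ≤ |t| ∧ |t - z| ≤ 1 := by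
  rcases le_total 0 t with ht | ht
  · refine ⟨⌊t⌋, ?_, ?_⟩
    · rw [abs_of_nonneg ht, abs_of_nonneg (by exact_mod_cast Int.floor_nonneg.mpr ht)]
      exact Int.floor_le t
    · rw [abs_of_nonneg (by linarith [Int.floor_le t])]
      linarith [Int.sub_one_lt_floor t]
  · refine ⟨⌈t⌉, ?_, ?_⟩
    · rw [abs_of_nonpos ht, abs_of_nonpos (by exact_mod_cast Int.ceil_le.mpr (by simpa))]
      exact neg_le_neg (Int.le_ceil t)
    · rw [abs_of_nonpos (by linarith [Int.le_ceil t])]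
      linarith [Int.ceil_lt_add_one t]

variable {ι : Type*} [Fintype ι]

theorem EuclideanSpace.exists_grid_near {δ : ℝ} (hδ : 0 < δ) (x : EuclideanSpace ℝ ι) :
    ∃ u : EuclideanSpace ℝ ι, (∀ i, ∃ z : ℤ, u i = δ * z) ∧ ‖u‖ ≤ ‖x‖ ∧
      ‖x - u‖ ≤ √(Fintype.card ι) * δ := by
  choose z hz_abs hz_sub using fun i => exists_int_abs_le_abs_sub_le_one (x i / δ)
  let u : EuclideanSpace ℝ ι := WithLp.toLp 2 fun i => δ * z i
  have hu_abs (i : ι) : |u i| ≤ |x i| :=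
    calc |u i| = δ * |(z i : ℝ)| := by simp [u, abs_mul, abs_of_pos hδ]
      _ ≤ δ * |x i / δ| := mul_le_mul_of_nonneg_left (hz_abs i) hδ.le
      _ = |x i| := by rw [abs_div, abs_of_pos hδ, mul_div_cancel₀ _ hδ.ne']
  have hsub_abs (i : ι) : |(x - u) i| ≤ δ :=
    calc |(x - u) i| = δ * |x i / δ - z i| := by
          rw [← abs_of_pos hδ, ← abs_mul, abs_of_pos hδ, mul_sub, mul_div_cancel₀ _ hδ.ne']
          simp [u]
      _ ≤ δ := mul_le_of_le_one_right hδ.le (hz_sub i)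
  refine ⟨u, fun i => ⟨z i, rfl⟩, ?_, ?_⟩
  · refine le_of_pow_le_pow_left₀ two_ne_zero (norm_nonneg _) ?_
    simp only [EuclideanSpace.real_norm_sq_eq]
    exact Finset.sum_le_sum fun i _ => sq_le_sq.mpr (hu_abs i)
  · refine le_of_pow_le_pow_left₀ two_ne_zero (by positivity) ?_
    calc ‖x - u‖ ^ 2 = ∑ i, (x - u) i ^ 2 := EuclideanSpace.real_norm_sq_eq _
      _ ≤ ∑ _i : ι, δ ^ 2 :=
        Finset.sum_le_sum fun i _ => sq_le_sq.mpr ((hsub_abs i).trans (le_abs_self δ))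
      _ = (√(Fintype.card ι) * δ) ^ 2 := by
        rw [Finset.sum_const, Finset.card_univ, nsmul_eq_mul, mul_pow, Real.sq_sqrt (by positivity)]

theorem EuclideanSpace.isUnitBallNet_grid [Nonempty ι] {ε : ℝ} (hε : 0 < ε) :
    IsUnitBallNet {u : EuclideanSpace ℝ ι |
      ‖u‖ ≤ 1 ∧ ∀ i, ∃ z : ℤ, √(Fintype.card ι) * u i / ε = z} ε := by
  intro x hx
  have hcard : 0 < √(Fintype.card ι) := Real.sqrt_pos.mpr (by exact_mod_cast Fintype.card_pos)
  obtain ⟨u, hu_grid, hu_norm, hxu⟩ := exists_grid_near (div_pos hε hcard) x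
  refine ⟨u, ⟨hu_norm.trans hx, fun i => ?_⟩, ?_⟩
  · obtain ⟨z, hz⟩ := hu_grid i
    exact ⟨z, by rw [hz]; field_simp⟩
  · rwa [mul_div_cancel₀ _ hcard.ne'] at hxu

end Grid

open scoped RealInnerProductSpace in
/-- Grid-net bound for the spectral norm: if `N` is the ε-net of grid points in the unit
ball and `|xᵀAy| ≤ C` for all `x, y ∈ N`, then `‖A‖₂ ≤ (1-ε)⁻² C`. -/
theorem stmt7 (n : ℕ) (hn : 0 < n) (ε : ℝ) (hε0 : 0 < ε) (hε1 : ε < 1)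
    (A : Matrix (Fin n) (Fin n) ℝ)
    (N : Set (Fin n → ℝ))
    (hN : N = {x | (∑ i, x i ^ 2) ≤ 1 ∧ ∀ i, ∃ z : ℤ, Real.sqrt n * x i / ε = (z : ℝ)})
    (C : ℝ)
    (hC : ∀ x ∈ N, ∀ y ∈ N, |x ⬝ᵥ A.mulVec y| ≤ C) :
    ‖Matrix.toEuclideanCLM (𝕜 := ℝ) A‖ ≤ (1 - ε)⁻¹ ^ 2 * C := by
  have : Nonempty (Fin n) := Fin.pos_iff_nonempty.mp hn
  have hnet : IsUnitBallNet {u : EuclideanSpace ℝ (Fin n) | WithLp.ofLp u ∈ N} ε := by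
    refine (EuclideanSpace.isUnitBallNet_grid hε0).mono fun u ⟨hu_norm, hu_grid⟩ => ?_
    rw [Fintype.card_fin] at hu_grid
    rw [hN]
    refine ⟨?_, hu_grid⟩
    rw [← EuclideanSpace.real_norm_sq_eq]
    exact pow_le_one₀ (norm_nonneg u) hu_norm
  refine (Matrix.toEuclideanCLM (𝕜 := ℝ) A).opNorm_le_of_inner_isUnitBallNet hε1 hnet hnet
    fun u hu v hv => ?_
  rw [Real.norm_eq_abs, Matrix.inner_toEuclideanCLM]
  exact hC _ hv _ hu
end

section
/- Let A and Â be symmetric n×n matrices, with A having exactly K nonzero eigenvalues all of absolute value at least λ_K > 0, and suppose U ∈ R^{n×K} and Û ∈ R^{n×K} are matrices of K leading orthonormal eigenvectors of A and Â respectively. Then there exists a K×K orthogonal matrix O such that ‖Û - U O‖_F ≤ (2√(2K) / λ_K) ‖Â - A‖₂. -/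
/-!
Let `P` be the orthogonal projection onto the column space of `U`, which is the range of `A`
because `rank A = K`, and let `ε = ‖Â - A‖₂`. For a column `v` of `Û` with `Â v = ν v`,
`(1 - P) Â v = (1 - P) (Â - A) v`, so `|ν| ‖(1 - P) v‖ ≤ ε`. A Courant–Fischer dimension count
(the column space of `U` meets the orthogonal complement of the other columns of `Û`) gives
Weyl's bound `λ_K ≤ |ν| + ε`; with `‖(1 - P) v‖ ≤ 1` this yields `λ_K ‖(1 - P) v‖ ≤ 2 ε`.
Finally, for `W = Uᵀ Û` and orthogonal `O`, `‖Û - U O‖_F² = 2K - 2 tr (Oᵀ W)`, and the polar factor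
`O` of the contraction `W` has `tr (Oᵀ W) ≥ tr (Wᵀ W) = K - ∑ₖ ‖(1 - P) vₖ‖²`.
-/

open Matrix Module Submodule WithLp
open scoped RealInnerProductSpace Matrix.Norms.L2Operator

section LinearAlgebra

variable {K V ι : Type*} [DivisionRing K] [AddCommGroup V] [Module K V]

theorem Submodule.exists_ne_zero_mem_inf_of_finrank_lt_add [FiniteDimensional K V]
    {S W : Submodule K V} (h : finrank K V < finrank K S + finrank K W) :
    ∃ x ∈ S ⊓ W, x ≠ 0 := by
  refine exists_mem_ne_zero_of_ne_bot fun hbot => ?_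
  have := finrank_sup_add_finrank_inf_eq S W
  rw [hbot, finrank_bot] at this
  have := (S ⊔ W).finrank_le
  omega

theorem finrank_span_image_compl_singleton_add_one_le [Fintype ι] (v : ι → V) (j : ι) :
    finrank K (span K (v '' {j}ᶜ)) + 1 ≤ Fintype.card ι := by
  classical
  have h := finrank_range_le_card (R := K) (fun k : ({j}ᶜ : Set ι) => v k)
  rw [← Set.image_eq_range, Fintype.card_compl_set, Set.card_singleton] at h
  have : 0 < Fintype.card ι := Fintype.card_pos_iff.2 ⟨j⟩
  unfold Set.finrank at h
  omega

theorem span_image_le_comap_of_eigenvectors {T : V →ₗ[K] V} {v : ι → V} {ν : ι → K}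
    (hTv : ∀ k, T (v k) = ν k • v k) (s : Set ι) :
    span K (v '' s) ≤ (span K (v '' s)).comap T := by
  rw [span_le]
  rintro _ ⟨k, hk, rfl⟩
  simpa [hTv] using smul_mem _ (ν k) (subset_span (Set.mem_image_of_mem v hk))

theorem LinearMap.range_eq_span_of_eigenvectors [FiniteDimensional K V] [Fintype ι]
    {T : V →ₗ[K] V} {u : ι → V} (hu : LinearIndependent K u) {μ : ι → K}
    (hTu : ∀ k, T (u k) = μ k • u k) (hμ : ∀ k, μ k ≠ 0)
    (hrank : finrank K (LinearMap.range T) ≤ Fintype.card ι) :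
    LinearMap.range T = span K (Set.range u) := by
  have hle : span K (Set.range u) ≤ LinearMap.range T := by
    rw [span_le]
    rintro _ ⟨k, rfl⟩
    exact ⟨(μ k)⁻¹ • u k, by rw [map_smul, hTu, smul_smul, inv_mul_cancel₀ (hμ k), one_smul]⟩
  refine (eq_of_le_of_finrank_le hle ?_).symm
  rwa [finrank_span_eq_card hu]

end LinearAlgebra

section InnerProductSpace

variable {E ι : Type*} [NormedAddCommGroup E] [InnerProductSpace ℝ E]

theorem exists_orthonormalBasis_eq_norm_smul [FiniteDimensional ℝ E] [Fintype ι]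
    (hcard : finrank ℝ E = Fintype.card ι) {c : ι → E}
    (hc : Pairwise fun i j => ⟪c i, c j⟫ = 0) :
    ∃ e : OrthonormalBasis ι ℝ E, ∀ i, c i = ‖c i‖ • e i := by
  let s : Set ι := {i | c i ≠ 0}
  have hs : Orthonormal ℝ (s.domRestrict fun i => ‖c i‖⁻¹ • c i) := by
    refine ⟨fun i => norm_smul_inv_norm i.2, fun i j hij => ?_⟩
    simp [Set.domRestrict, real_inner_smul_left, real_inner_smul_right,
      hc (Subtype.coe_ne_coe.2 hij)]
  obtain ⟨e, he⟩ := hs.exists_orthonormalBasis_extension_of_card_eq hcard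
  refine ⟨e, fun i => ?_⟩
  by_cases hi : c i = 0
  · simp [hi]
  · rw [he i hi, smul_smul, mul_inv_cancel₀ (norm_ne_zero_iff.2 hi), one_smul]

theorem Orthonormal.norm_sq_sum_smul [Fintype ι] {u : ι → E} (hu : Orthonormal ℝ u)
    (a : ι → ℝ) : ‖∑ k, a k • u k‖ ^ 2 = ∑ k, a k ^ 2 := by
  rw [← real_inner_self_eq_norm_sq, hu.inner_sum]
  simp [sq]

theorem Orthonormal.sum_inner_sq_add_norm_sq_starProjection_orthogonal [FiniteDimensional ℝ E]
    [Fintype ι] {u : ι → E} (hu : Orthonormal ℝ u) (x : E) :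
    ∑ j, ⟪u j, x⟫ ^ 2 + ‖(span ℝ (Set.range u))ᗮ.starProjection x‖ ^ 2 = ‖x‖ ^ 2 := by
  let b := (Basis.span hu.linearIndependent).toOrthonormalBasis (by
    rw [show ⇑(Basis.span hu.linearIndependent) = _ from
      funext (Basis.span_apply hu.linearIndependent)]
    exact orthonormal_span hu)
  have hb (j) : (b j : E) = u j := by simp [b, Basis.span_apply]
  have hproj : ‖(span ℝ (Set.range u)).starProjection x‖ ^ 2 = ∑ j, ⟪u j, x⟫ ^ 2 := by
    rw [b.starProjection_eq_sum_rankOne]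
    simpa [hb] using hu.norm_sq_sum_smul _
  rw [← hproj, ← norm_sq_eq_add_norm_sq_starProjection]

theorem Orthonormal.mul_norm_le_norm_apply_of_mem_span [Fintype ι] {u : ι → E}
    (hu : Orthonormal ℝ u) {T : E →ₗ[ℝ] E} {μ : ι → ℝ} (hTu : ∀ k, T (u k) = μ k • u k)
    {lam : ℝ} (hlam : 0 ≤ lam) (hμ : ∀ k, lam ≤ |μ k|) {x : E}
    (hx : x ∈ span ℝ (Set.range u)) : lam * ‖x‖ ≤ ‖T x‖ := by
  obtain ⟨a, rfl⟩ := (mem_span_range_iff_exists_fun ℝ).1 hx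
  have hTx : T (∑ k, a k • u k) = ∑ k, (a k * μ k) • u k := by
    simp [map_sum, hTu, smul_smul]
  rw [hTx, ← sq_le_sq₀ (by positivity) (norm_nonneg _), mul_pow, hu.norm_sq_sum_smul,
    hu.norm_sq_sum_smul, Finset.mul_sum]
  gcongr with k
  rw [mul_pow, mul_comm, ← sq_abs (μ k)]
  gcongr
  exact hμ k

theorem LinearMap.IsSymmetric.norm_apply_le_of_abs_eigenvalue_le [FiniteDimensional ℝ E]
    {T : E →ₗ[ℝ] E} (hT : T.IsSymmetric) {m : ℝ} (hm : ∀ c, Module.End.HasEigenvalue T c → |c| ≤ m)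
    (x : E) : ‖T x‖ ≤ m * ‖x‖ := by
  rcases eq_or_ne x 0 with rfl | hx
  · simp
  have hn := (rfl : finrank ℝ E = finrank ℝ E)
  let b := hT.eigenvectorBasis hn
  have hb (i) : |hT.eigenvalues hn i| ≤ m := hm _ (hT.hasEigenvalue_eigenvalues hn i)
  have hm0 : 0 ≤ m := (abs_nonneg _).trans (hb ⟨0, finrank_pos_iff_exists_ne_zero.2 ⟨x, hx⟩⟩)
  rw [← b.repr.norm_map, ← b.repr.norm_map x, ← sq_le_sq₀ (norm_nonneg _) (by positivity),
    mul_pow, EuclideanSpace.norm_sq_eq, EuclideanSpace.norm_sq_eq, Finset.mul_sum]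
  gcongr with i
  rw [hT.eigenvectorBasis_apply_self_apply, norm_mul, mul_pow]
  gcongr
  exact (Real.norm_eq_abs _).trans_le (hb i)

theorem LinearMap.IsSymmetric.mem_orthogonal_of_le_comap {T : E →ₗ[ℝ] E}
    (hT : T.IsSymmetric) {S : Submodule ℝ E} (hS : S ≤ S.comap T) {x : E} (hx : x ∈ Sᗮ) :
    T x ∈ Sᗮ := fun y hy => by rw [← hT]; exact hx _ (hS hy)

theorem LinearMap.IsSymmetric.norm_apply_le_of_mem_orthogonal_span_compl [FiniteDimensional ℝ E]
    {T : E →ₗ[ℝ] E} (hT : T.IsSymmetric) {v : ι → E} {ν : ι → ℝ}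
    (hTv : ∀ k, T (v k) = ν k • v k) {j : ι}
    (hlead : ∀ (c : ℝ) (x : E), x ≠ 0 → T x = c • x → (∀ k, ⟪x, v k⟫ = 0) → |c| ≤ |ν j|)
    {x : E} (hx : x ∈ (span ℝ (v '' {j}ᶜ))ᗮ) : ‖T x‖ ≤ |ν j| * ‖x‖ := by
  set S := (span ℝ (v '' {j}ᶜ))ᗮ
  have hS : ∀ y ∈ S, T y ∈ S := fun y =>
    hT.mem_orthogonal_of_le_comap (span_image_le_comap_of_eigenvectors hTv _)
  refine (hT.restrict_invariant hS).norm_apply_le_of_abs_eigenvalue_le (fun c hc => ?_) ⟨x, hx⟩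
  obtain ⟨a, ha⟩ := hc.exists_hasEigenvector
  have hTa : T a = c • (a : E) := congrArg Subtype.val ha.apply_eq_smul
  rcases eq_or_ne c (ν j) with rfl | hcj
  · exact le_rfl
  -- an eigenvector of `T` in `S` whose eigenvalue is not `ν j` is orthogonal to `v j` as well
  refine hlead c a (by simpa using ha.2) hTa fun k => ?_
  rcases eq_or_ne k j with rfl | hk
  · have : (c - ν k) * ⟪(a : E), v k⟫ = 0 := by
      rw [sub_mul, ← real_inner_smul_left, ← real_inner_smul_right, ← hTa, ← hTv, hT, sub_self]
    exact (mul_eq_zero.1 this).resolve_left (sub_ne_zero.2 hcj)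
  · rw [real_inner_comm]
    exact a.2 _ (subset_span ⟨k, hk, rfl⟩)

theorem LinearMap.IsSymmetric.le_abs_eigenvalue_add [FiniteDimensional ℝ E] [Fintype ι]
    {T T' : E →ₗ[ℝ] E} (hT' : T'.IsSymmetric) {u v : ι → E} (hu : Orthonormal ℝ u)
    {μ ν : ι → ℝ} (hTu : ∀ k, T (u k) = μ k • u k) (hT'v : ∀ k, T' (v k) = ν k • v k)
    {lam ε : ℝ} (hlam : 0 ≤ lam) (hμ : ∀ k, lam ≤ |μ k|) (hE : ∀ x, ‖(T' - T) x‖ ≤ ε * ‖x‖)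
    {j : ι}
    (hlead : ∀ (c : ℝ) (x : E), x ≠ 0 → T' x = c • x → (∀ k, ⟪x, v k⟫ = 0) → |c| ≤ |ν j|) :
    lam ≤ |ν j| + ε := by
  have hdim : finrank ℝ E <
      finrank ℝ (span ℝ (Set.range u)) + finrank ℝ (span ℝ (v '' {j}ᶜ))ᗮ := by
    have := (span ℝ (v '' {j}ᶜ)).finrank_add_finrank_orthogonal
    have := finrank_span_image_compl_singleton_add_one_le (K := ℝ) v j
    rw [finrank_span_eq_card hu.linearIndependent]
    omega
  obtain ⟨x, ⟨hxu, hxv⟩, hx⟩ := exists_ne_zero_mem_inf_of_finrank_lt_add hdim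
  refine le_of_mul_le_mul_right ?_ (norm_pos_iff.2 hx)
  calc lam * ‖x‖ ≤ ‖T x‖ := hu.mul_norm_le_norm_apply_of_mem_span hTu hlam hμ hxu
    _ ≤ ‖T' x‖ + ‖(T' - T) x‖ := by simpa using norm_sub_le (T' x) ((T' - T) x)
    _ ≤ |ν j| * ‖x‖ + ε * ‖x‖ :=
      add_le_add (hT'.norm_apply_le_of_mem_orthogonal_span_compl hT'v hlead hxv) (hE x)
    _ = (|ν j| + ε) * ‖x‖ := by ring

theorem abs_mul_norm_starProjection_orthogonal_le {S : Submodule ℝ E}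
    [S.HasOrthogonalProjection] {T T' : E →ₗ[ℝ] E} (hT : LinearMap.range T ≤ S) {v : E} {ν : ℝ}
    (hv : T' v = ν • v) : |ν| * ‖Sᗮ.starProjection v‖ ≤ ‖(T' - T) v‖ := by
  have : Sᗮ.starProjection (T' v) = Sᗮ.starProjection ((T' - T) v) := by
    rw [LinearMap.sub_apply, map_sub, starProjection_orthogonal_apply_eq_zero (hT ⟨v, rfl⟩),
      sub_zero]
  rw [← Real.norm_eq_abs, ← norm_smul, ← map_smul, ← hv, this]
  exact Sᗮ.norm_starProjection_apply_le _

theorem LinearMap.IsSymmetric.mul_norm_starProjection_orthogonal_le [FiniteDimensional ℝ E]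
    [Fintype ι] {T T' : E →ₗ[ℝ] E} (hT' : T'.IsSymmetric) {u v : ι → E} (hu : Orthonormal ℝ u)
    (hv : Orthonormal ℝ v) {μ ν : ι → ℝ} (hTu : ∀ k, T (u k) = μ k • u k)
    (hT'v : ∀ k, T' (v k) = ν k • v k) (hrange : LinearMap.range T ≤ span ℝ (Set.range u))
    {lam ε : ℝ} (hlam : 0 ≤ lam) (hμ : ∀ k, lam ≤ |μ k|) (hE : ∀ x, ‖(T' - T) x‖ ≤ ε * ‖x‖)
    {j : ι}
    (hlead : ∀ (c : ℝ) (x : E), x ≠ 0 → T' x = c • x → (∀ k, ⟪x, v k⟫ = 0) → |c| ≤ |ν j|) :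
    lam * ‖(span ℝ (Set.range u))ᗮ.starProjection (v j)‖ ≤ 2 * ε := by
  set w := ‖(span ℝ (Set.range u))ᗮ.starProjection (v j)‖
  have hEv : ‖(T' - T) (v j)‖ ≤ ε := by simpa [hv.1 j] using hE (v j)
  have hε : 0 ≤ ε := (norm_nonneg _).trans hEv
  have hw : w ≤ 1 := (norm_starProjection_apply_le _ _).trans (hv.1 j).le
  have hνw : |ν j| * w ≤ ε := (abs_mul_norm_starProjection_orthogonal_le hrange (hT'v j)).trans hEv
  calc lam * w ≤ (|ν j| + ε) * w :=
        mul_le_mul_of_nonneg_right (hT'.le_abs_eigenvalue_add hu hTu hT'v hlam hμ hE hlead)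
          (norm_nonneg _)
    _ = |ν j| * w + ε * w := add_mul ..
    _ ≤ ε + ε * 1 := add_le_add hνw (mul_le_mul_of_nonneg_left hw hε)
    _ = 2 * ε := by ring

end InnerProductSpace

namespace Matrix

variable {m ι : Type*} [Fintype m] [Fintype ι] [DecidableEq ι]

omit [Fintype ι] [DecidableEq ι] in
theorem real_inner_col_col (X Y : Matrix m ι ℝ) (i j : ι) :
    ⟪toLp 2 (Xᵀ i), toLp 2 (Yᵀ j)⟫ = (Xᵀ * Y) i j := by
  simpa using inner_matrix_col_col X Y i j

omit [Fintype ι] in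
theorem orthonormal_cols_iff (X : Matrix m ι ℝ) :
    Orthonormal ℝ (fun i => toLp 2 (Xᵀ i)) ↔ Xᵀ * X = 1 := by
  simp [orthonormal_iff_ite, real_inner_col_col, ← Matrix.ext_iff, Matrix.one_apply]

omit [DecidableEq ι] in
theorem trace_transpose_mul_self_eq_sum_sq (X : Matrix m ι ℝ) :
    (Xᵀ * X).trace = ∑ i, ∑ k, X i k ^ 2 := by
  simp only [trace, diag, mul_apply, transpose_apply, sq]
  exact Finset.sum_comm

omit [DecidableEq ι] in
theorem trace_transpose_mul_eq_sum_inner (X Y : Matrix m ι ℝ) :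
    (Xᵀ * Y).trace = ∑ i, ⟪toLp 2 (Xᵀ i), toLp 2 (Yᵀ i)⟫ := by
  simp [trace, real_inner_col_col]

theorem trace_transpose_mul_self_mul_orthogonal (X : Matrix m ι ℝ) {Q : Matrix ι ι ℝ}
    (hQ : Q * Qᵀ = 1) : ((X * Q)ᵀ * (X * Q)).trace = (Xᵀ * X).trace := by
  rw [transpose_mul, Matrix.mul_assoc, trace_mul_comm Qᵀ, Matrix.mul_assoc, Matrix.mul_assoc, hQ,
    Matrix.mul_one]

theorem sum_sq_sub_mul_eq (U V : Matrix m ι ℝ) (O : Matrix ι ι ℝ) (hU : Uᵀ * U = 1)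
    (hV : Vᵀ * V = 1) (hO : Oᵀ * O = 1) :
    ∑ i, ∑ k, (V i k - (U * O) i k) ^ 2 = 2 * Fintype.card ι - 2 * (Oᵀ * (Uᵀ * V)).trace := by
  have hUO : (U * O)ᵀ * (U * O) = 1 := by
    rw [transpose_mul, Matrix.mul_assoc, ← Matrix.mul_assoc Uᵀ, hU, Matrix.one_mul, hO]
  have hcross : (Vᵀ * (U * O))ᵀ = (U * O)ᵀ * V := by rw [transpose_mul, transpose_transpose]
  simp only [← sub_apply, ← trace_transpose_mul_self_eq_sum_sq]
  rw [transpose_sub, Matrix.sub_mul, Matrix.mul_sub, Matrix.mul_sub, hV, hUO, trace_sub,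
    trace_sub, trace_sub, ← trace_transpose (Vᵀ * (U * O)), hcross, transpose_mul,
    Matrix.mul_assoc, trace_one]
  ring

theorem range_toEuclideanLin_eq_span_cols [DecidableEq m] (A : Matrix m m ℝ) (U : Matrix m ι ℝ)
    (hU : Uᵀ * U = 1) {μ : ι → ℝ} (hUeig : ∀ k, A *ᵥ Uᵀ k = μ k • Uᵀ k) (hμ : ∀ k, μ k ≠ 0)
    (hrank : A.rank ≤ Fintype.card ι) :
    LinearMap.range (toEuclideanLin A) = span ℝ (Set.range fun k => toLp 2 (Uᵀ k)) := by
  refine LinearMap.range_eq_span_of_eigenvectors ((orthonormal_cols_iff U).2 hU).linearIndependent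
    (fun k => congrArg (toLp 2) (hUeig k)) hμ ?_
  rwa [toEuclideanLin_eq_toLin_orthonormal, ← rank_eq_finrank_range_toLin]

theorem l2_opNorm_le_one_of_transpose_mul_self_eq_one (X : Matrix m ι ℝ)
    (hX : Xᵀ * X = 1) : ‖X‖ ≤ 1 := by
  have h1 : ‖(1 : Matrix ι ι ℝ)‖ ≤ 1 := by
    rw [← diagonal_one, l2_opNorm_diagonal]
    exact pi_norm_le_iff_of_nonneg zero_le_one |>.2 fun _ => by simp
  have : ‖X‖ * ‖X‖ ≤ 1 := by
    rw [← l2_opNorm_conjTranspose_mul_self, conjTranspose_eq_transpose_of_trivial, hX]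
    exact h1
  nlinarith [norm_nonneg X]

theorem exists_orthogonal_trace_transpose_mul_self_le (M : Matrix ι ι ℝ) (hM : ‖M‖ ≤ 1) :
    ∃ O : Matrix ι ι ℝ, Oᵀ * O = 1 ∧ (Mᵀ * M).trace ≤ (Oᵀ * M).trace := by
  have hG : (Mᵀ * M).IsHermitian := by simpa using isHermitian_conjTranspose_mul_self M
  let Q : Matrix ι ι ℝ := hG.eigenvectorUnitary
  have hstar : star Q = Qᵀ := by rw [star_eq_conjTranspose, conjTranspose_eq_transpose_of_trivial]
  have hQ : Qᵀ * Q = 1 := hstar ▸ Unitary.coe_star_mul_self hG.eigenvectorUnitary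
  have hQ' : Q * Qᵀ = 1 := mul_eq_one_comm.1 hQ
  have hdiag : (M * Q)ᵀ * (M * Q) = diagonal hG.eigenvalues := by
    simpa [← hstar, Matrix.mul_assoc] using hG.conjStarAlgAut_star_eigenvectorUnitary
  let c i : EuclideanSpace ℝ ι := toLp 2 ((M * Q)ᵀ i)
  have hc : Pairwise fun i j => ⟪c i, c j⟫ = 0 := fun i j hij => by
    simp only [c, real_inner_col_col, hdiag, diagonal_apply_ne _ hij]
  obtain ⟨e, he⟩ := exists_orthonormalBasis_eq_norm_smul (by simp) hc
  let C : Matrix ι ι ℝ := of fun p i => e i p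
  have hC : Cᵀ * C = 1 := (orthonormal_cols_iff C).1 e.orthonormal
  have hcle (i) : ‖c i‖ ≤ 1 := by
    have hci : c i = (EuclideanSpace.equiv ι ℝ).symm (M *ᵥ hG.eigenvectorBasis i) := by
      ext p
      simp [c, Q, mul_apply, mulVec, dotProduct]
    calc ‖c i‖ ≤ ‖M‖ * ‖hG.eigenvectorBasis i‖ := hci ▸ l2_opNorm_mulVec M _
      _ ≤ 1 := by rw [hG.eigenvectorBasis.orthonormal.1 i, mul_one]; exact hM
  -- `C * Qᵀ` sends the `i`-th column of `Q` to `e i`, the direction of its image `c i` under `M`: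
  -- it is an orthogonal polar factor of `M`
  refine ⟨C * Qᵀ, ?_, ?_⟩
  · rw [transpose_mul, transpose_transpose, Matrix.mul_assoc, ← Matrix.mul_assoc Cᵀ, hC,
      Matrix.one_mul, hQ']
  have h1 : (Mᵀ * M).trace = ∑ i, ‖c i‖ ^ 2 := by
    simp_rw [← trace_transpose_mul_self_mul_orthogonal M hQ', trace_transpose_mul_eq_sum_inner,
      real_inner_self_eq_norm_sq, c]
  have h2 : ((C * Qᵀ)ᵀ * M).trace = ∑ i, ‖c i‖ := by
    rw [transpose_mul, transpose_transpose, Matrix.mul_assoc, trace_mul_comm, Matrix.mul_assoc,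
      trace_transpose_mul_eq_sum_inner]
    refine Finset.sum_congr rfl fun i _ => ?_
    change ⟪e i, c i⟫ = ‖c i‖
    conv_lhs => rw [he i]
    rw [real_inner_smul_right, real_inner_self_eq_norm_sq, e.orthonormal.1 i, one_pow, mul_one]
  rw [h1, h2]
  gcongr with i
  nlinarith [norm_nonneg (c i), hcle i]

theorem exists_orthogonal_sum_sq_sub_mul_le [DecidableEq m] (U V : Matrix m ι ℝ)
    (hU : Uᵀ * U = 1) (hV : Vᵀ * V = 1) {δ : ℝ}
    (hδ : ∀ k, ‖(span ℝ (Set.range fun j => toLp 2 (Uᵀ j)))ᗮ.starProjection (toLp 2 (Vᵀ k))‖ ≤ δ) :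
    ∃ O : Matrix ι ι ℝ, Oᵀ * O = 1 ∧
      ∑ i, ∑ k, (V i k - (U * O) i k) ^ 2 ≤ 2 * Fintype.card ι * δ ^ 2 := by
  have hW : ‖Uᵀ * V‖ ≤ 1 := by
    refine (l2_opNorm_mul _ _).trans (mul_le_one₀ ?_ (norm_nonneg _) ?_)
    · rw [← conjTranspose_eq_transpose_of_trivial, l2_opNorm_conjTranspose]
      exact l2_opNorm_le_one_of_transpose_mul_self_eq_one U hU
    · exact l2_opNorm_le_one_of_transpose_mul_self_eq_one V hV
  obtain ⟨O, hO, htr⟩ := exists_orthogonal_trace_transpose_mul_self_le _ hW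
  refine ⟨O, hO, ?_⟩
  have htrW : ((Uᵀ * V)ᵀ * (Uᵀ * V)).trace = ∑ k, (1 -
      ‖(span ℝ (Set.range fun j => toLp 2 (Uᵀ j)))ᗮ.starProjection (toLp 2 (Vᵀ k))‖ ^ 2) := by
    rw [trace_transpose_mul_self_eq_sum_sq, Finset.sum_comm]
    refine Finset.sum_congr rfl fun k _ => ?_
    have hvk : ‖toLp 2 (Vᵀ k)‖ ^ 2 = 1 := by rw [((orthonormal_cols_iff V).2 hV).1 k, one_pow]
    rw [← hvk, ← ((orthonormal_cols_iff U).2 hU).sum_inner_sq_add_norm_sq_starProjection_orthogonal]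
    simp [real_inner_col_col]
  rw [htrW, Finset.sum_sub_distrib] at htr
  have hsq (k : ι) := pow_le_pow_left₀ (norm_nonneg _) (hδ k) 2
  have := Finset.sum_le_sum fun k (_ : k ∈ Finset.univ) => hsq k
  simp only [Finset.sum_const, Finset.card_univ, nsmul_eq_mul, mul_one] at htr this
  rw [sum_sq_sub_mul_eq U V O hU hV hO]
  linarith

end Matrix

theorem stmt12_general (n K : ℕ) (lamK : ℝ) (hlam : 0 < lamK)
    (A Ahat : Matrix (Fin n) (Fin n) ℝ) (hAhat : Ahat.IsSymm)
    (hrank : A.rank = K)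
    (U Uhat : Matrix (Fin n) (Fin K) ℝ) (μ ν : Fin K → ℝ)
    (hUorth : Uᵀ * U = 1) (hUhatorth : Uhatᵀ * Uhat = 1)
    (hUeig : ∀ k, A.mulVec (fun i => U i k) = μ k • (fun i => U i k))
    (hμ : ∀ k, lamK ≤ |μ k|)
    (hUhateig : ∀ k, Ahat.mulVec (fun i => Uhat i k) = ν k • (fun i => Uhat i k))
    (hlead : ∀ (c : ℝ) (x : Fin n → ℝ), x ≠ 0 → Ahat.mulVec x = c • x →
      (∀ k, (∑ i, x i * Uhat i k) = 0) → ∀ k, |c| ≤ |ν k|) :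
    ∃ O : Matrix (Fin K) (Fin K) ℝ, Oᵀ * O = 1 ∧
      Real.sqrt (∑ i, ∑ k, (Uhat i k - (U * O) i k) ^ 2) ≤
        2 * Real.sqrt (2 * K) / lamK * ‖Matrix.toEuclideanCLM (𝕜 := ℝ) (Ahat - A)‖ := by
  set ε := ‖Matrix.toEuclideanCLM (𝕜 := ℝ) (Ahat - A)‖
  let u k : EuclideanSpace ℝ (Fin n) := toLp 2 (Uᵀ k)
  have hu : Orthonormal ℝ u := (orthonormal_cols_iff U).2 hUorth
  have hrange := (range_toEuclideanLin_eq_span_cols A U hUorth hUeig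
    (fun k => abs_pos.1 (hlam.trans_le (hμ k))) (by rw [hrank, Fintype.card_fin])).le
  have hT' : (toEuclideanLin Ahat).IsSymmetric :=
    isSymmetric_toEuclideanLin_iff.2 (isHermitian_iff_isSymm.2 hAhat)
  have hcol (k) : lamK * ‖(span ℝ (Set.range u))ᗮ.starProjection (toLp 2 (Uhatᵀ k))‖ ≤ 2 * ε := by
    refine hT'.mul_norm_starProjection_orthogonal_le hu ((orthonormal_cols_iff Uhat).2 hUhatorth)
      (fun k => congrArg (toLp 2) (hUeig k)) (fun k => congrArg (toLp 2) (hUhateig k)) hrange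
      hlam.le hμ (fun x => ?_) (fun c x hx hcx hxv => ?_)
    · rw [← map_sub]
      exact (toEuclideanCLM (𝕜 := ℝ) (Ahat - A)).le_opNorm x
    · refine hlead c (ofLp x) (by simpa using hx) (congrArg ofLp hcx) (fun l => ?_) k
      rw [← hxv l]
      simp [PiLp.inner_apply, mul_comm]
  obtain ⟨O, hO, hOle⟩ := exists_orthogonal_sum_sq_sub_mul_le U Uhat hUorth hUhatorth
    fun k => (le_div_iff₀' hlam).2 (hcol k)
  refine ⟨O, hO, (Real.sqrt_le_left (by positivity)).2 (hOle.trans_eq ?_)⟩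
  have h2K : Real.sqrt (2 * K) ^ 2 = 2 * K := Real.sq_sqrt (by positivity)
  rw [Fintype.card_fin]
  field_simp
  rw [h2K]
  ring

/-- Davis–Kahan-type bound (Theorem 3.1 of Lei–Rinaldo 2015): if the symmetric matrix `A` has
rank `K` with all nonzero eigenvalues of magnitude at least `λ_K`, `U` collects orthonormal
eigenvectors of `A` for these eigenvalues, and `Û` collects `K` leading orthonormal
eigenvectors of the symmetric matrix `Â`, then some orthogonal `O` satisfies
`‖Û - U O‖_F ≤ (2√(2K)/λ_K)‖Â - A‖₂`. -/
theorem stmt12 (n K : ℕ) (hK : 0 < K) (lamK : ℝ) (hlam : 0 < lamK)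
    (A Ahat : Matrix (Fin n) (Fin n) ℝ) (hA : A.IsSymm) (hAhat : Ahat.IsSymm)
    (hrank : A.rank = K)
    (U Uhat : Matrix (Fin n) (Fin K) ℝ) (μ ν : Fin K → ℝ)
    (hUorth : Uᵀ * U = 1) (hUhatorth : Uhatᵀ * Uhat = 1)
    (hUeig : ∀ k, A.mulVec (fun i => U i k) = μ k • (fun i => U i k))
    (hμ : ∀ k, lamK ≤ |μ k|)
    (hUhateig : ∀ k, Ahat.mulVec (fun i => Uhat i k) = ν k • (fun i => Uhat i k))
    (hlead : ∀ (c : ℝ) (x : Fin n → ℝ), x ≠ 0 → Ahat.mulVec x = c • x →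
      (∀ k, (∑ i, x i * Uhat i k) = 0) → ∀ k, |c| ≤ |ν k|) :
    ∃ O : Matrix (Fin K) (Fin K) ℝ, Oᵀ * O = 1 ∧
      Real.sqrt (∑ i, ∑ k, (Uhat i k - (U * O) i k) ^ 2) ≤
        2 * Real.sqrt (2 * K) / lamK * ‖Matrix.toEuclideanCLM (𝕜 := ℝ) (Ahat - A)‖ :=
  stmt12_general n K lamK hlam A Ahat hAhat hrank U Uhat μ ν hUorth hUhatorth hUeig hμ hUhateig
    hlead
end

section
/- Let U = ΘX' where Θ ∈ M_{n,K} is a membership matrix with community sizes n_k and X' ∈ R^{K×K} satisfies ‖X'_{k·} - X'_{l·}‖₂ = √(1/n_k + 1/n_l) for k ≠ l. Define δ_k = min_{l ≠ k} ‖X'_{k·} - X'_{l·}‖₂ and, for Û ∈ R^{n×K}, S_k = {i ∈ G_k : ‖Û_{i·} - U_{i·}‖₂ > δ_k/2}. Then Σ_k |S_k| δ_k²/4 ≤ ‖Û - U‖_F², and since n_k δ_k² ≥ 1, Σ_k |S_k|/n_k ≤ 4 ‖Û - U‖_F². -/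
open Matrix

/-- Misclustering counting bound: with `U = ΘX'`, `δ_k = min_{l≠k}‖X'_{k·} - X'_{l·}‖₂` and
`S_k` the nodes of community `k` whose estimated eigenvector row deviates by more than
`δ_k/2`, we have `Σ_k |S_k| δ_k²/4 ≤ ‖Û - U‖_F²` and `Σ_k |S_k|/n_k ≤ 4‖Û - U‖_F²`. -/
theorem stmt14 (n K : ℕ) (hK : 1 < K) (g : Fin n → Fin K)
    (nk : Fin K → ℕ) (hnk : ∀ k, nk k = (Finset.univ.filter (fun i => g i = k)).card)
    (hpos : ∀ k, 0 < nk k)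
    (X' : Matrix (Fin K) (Fin K) ℝ)
    (hX : ∀ k l, k ≠ l → Real.sqrt (∑ m, (X' k m - X' l m) ^ 2) =
        Real.sqrt (1 / (nk k : ℝ) + 1 / (nk l : ℝ)))
    (U : Matrix (Fin n) (Fin K) ℝ) (hU : ∀ i m, U i m = X' (g i) m)
    (Uhat : Matrix (Fin n) (Fin K) ℝ)
    (δ : Fin K → ℝ)
    (hδ : ∀ k, δ k = (Finset.univ.filter (fun l => l ≠ k)).inf'
        (by
          haveI : Nontrivial (Fin K) := Fin.nontrivial_iff_two_le.mpr hK
          obtain ⟨l, hl⟩ := exists_ne k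
          exact ⟨l, Finset.mem_filter.mpr ⟨Finset.mem_univ l, hl⟩⟩)
        (fun l => Real.sqrt (∑ m, (X' k m - X' l m) ^ 2)))
    (S : Fin K → Finset (Fin n))
    (hS : ∀ k, S k = Finset.univ.filter
        (fun i => g i = k ∧ δ k / 2 < Real.sqrt (∑ m, (Uhat i m - U i m) ^ 2))) :
    (∑ k, ((S k).card : ℝ) * δ k ^ 2 / 4 ≤ ∑ i, ∑ m, (Uhat i m - U i m) ^ 2) ∧
    (∑ k, ((S k).card : ℝ) / (nk k : ℝ) ≤ 4 * ∑ i, ∑ m, (Uhat i m - U i m) ^ 2) := by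
  set f : Fin n → ℝ := fun i => ∑ m, (Uhat i m - U i m) ^ 2 with hf
  have hfnn : ∀ i, 0 ≤ f i := fun i => Finset.sum_nonneg fun m _ => sq_nonneg _
  have hδprop : ∀ k, 0 ≤ δ k ∧ 1 / (nk k : ℝ) ≤ δ k ^ 2 := by
    intro k
    have hne : (Finset.univ.filter (fun l => l ≠ k)).Nonempty := by
      haveI : Nontrivial (Fin K) := Fin.nontrivial_iff_two_le.mpr hK
      obtain ⟨l, hl⟩ := exists_ne k
      exact ⟨l, Finset.mem_filter.mpr ⟨Finset.mem_univ l, hl⟩⟩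
    obtain ⟨l, hl, hle⟩ := Finset.exists_mem_eq_inf' hne
      (fun l => Real.sqrt (∑ m, (X' k m - X' l m) ^ 2))
    have hlk : l ≠ k := (Finset.mem_filter.mp hl).2
    have h0 : δ k = Real.sqrt (∑ m, (X' k m - X' l m) ^ 2) := by
      rw [hδ k]; exact hle
    have h1 : δ k = Real.sqrt (1 / (nk k : ℝ) + 1 / (nk l : ℝ)) :=
      h0.trans (hX k l hlk.symm)
    have hk0 : (0:ℝ) < (nk k : ℝ) := by exact_mod_cast hpos k
    have hl0 : (0:ℝ) < (nk l : ℝ) := by exact_mod_cast hpos l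
    have hnn : (0:ℝ) ≤ 1 / (nk k : ℝ) + 1 / (nk l : ℝ) := by positivity
    refine ⟨h1 ▸ Real.sqrt_nonneg _, ?_⟩
    rw [h1, Real.sq_sqrt hnn]
    have : (0:ℝ) ≤ 1 / (nk l : ℝ) := by positivity
    linarith
  have key : ∀ k, ((S k).card : ℝ) * δ k ^ 2 / 4 ≤ ∑ i ∈ S k, f i := by
    intro k
    have hterm : ∀ i ∈ S k, δ k ^ 2 / 4 ≤ f i := by
      intro i hi
      rw [hS k, Finset.mem_filter] at hi
      have h2 := hi.2.2
      have h3 : (δ k / 2) ^ 2 < Real.sqrt (f i) ^ 2 :=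
        pow_lt_pow_left₀ h2 (by linarith [(hδprop k).1]) two_ne_zero
      rw [Real.sq_sqrt (hfnn i)] at h3
      nlinarith
    calc ((S k).card : ℝ) * δ k ^ 2 / 4 = (S k).card • (δ k ^ 2 / 4) := by
          rw [nsmul_eq_mul]; ring
      _ ≤ ∑ i ∈ S k, f i := Finset.card_nsmul_le_sum _ _ _ hterm
  have hdisj : Set.PairwiseDisjoint (Finset.univ : Finset (Fin K)) S := by
    intro k _ l _ hkl
    simp only [Finset.disjoint_left]
    intro i hik hil
    rw [hS k, Finset.mem_filter] at hik
    rw [hS l, Finset.mem_filter] at hil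
    exact hkl (hik.2.1.symm.trans hil.2.1)
  have hsum : ∑ k, ∑ i ∈ S k, f i ≤ ∑ i, f i := by
    rw [← Finset.sum_biUnion hdisj]
    exact Finset.sum_le_sum_of_subset_of_nonneg (Finset.subset_univ _)
      (fun i _ _ => hfnn i)
  have hmain : ∑ k, ((S k).card : ℝ) * δ k ^ 2 / 4 ≤ ∑ i, f i :=
    le_trans (Finset.sum_le_sum fun k _ => key k) hsum
  refine ⟨hmain, ?_⟩
  have h2 : ∑ k, ((S k).card : ℝ) / (nk k : ℝ) ≤
      ∑ k, 4 * (((S k).card : ℝ) * δ k ^ 2 / 4) := by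
    apply Finset.sum_le_sum
    intro k _
    have hδ2 := (hδprop k).2
    have hc : (0:ℝ) ≤ ((S k).card : ℝ) := Nat.cast_nonneg _
    rw [div_eq_mul_one_div]
    calc ((S k).card : ℝ) * (1 / (nk k : ℝ)) ≤ ((S k).card : ℝ) * δ k ^ 2 :=
          mul_le_mul_of_nonneg_left hδ2 hc
      _ = 4 * (((S k).card : ℝ) * δ k ^ 2 / 4) := by ring
  rw [← Finset.mul_sum] at h2
  have h3 : 4 * ∑ k, ((S k).card : ℝ) * δ k ^ 2 / 4 ≤ 4 * ∑ i, f i := by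
    linarith
  linarith
end

section
/- Let h₁, h₂ be the within- and between-community motif expectations of the balanced WSBM: h₁ = 3αp[(n/K-2)p² + (K-1)(n/K)p²(1-λ)²] and h₂ = 3αp(1-λ)[2(n/K-1)p²(1-λ) + (K-2)(n/K)p²(1-λ)²]. Then there exist constants 0 < c ≤ C (depending only on λ and K, for n/K ≥ 4) such that c·n α p³ ≤ h₁ - h₂ ≤ C·n α p³. -/
/-- The motif gap `h₁ - h₂` of the balanced WSBM scales as `nαp³`: for fixed `λ ∈ (0,1)` and
`K ≥ 2` there are constants `0 < c ≤ C` such that `c·nαp³ ≤ h₁ - h₂ ≤ C·nαp³` whenever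
`p ∈ (0,1]`, `α > 0`, and `n/K ≥ 4`. -/
theorem stmt17 (lam : ℝ) (hl0 : 0 < lam) (hl1 : lam < 1) (K : ℕ) (hK : 2 ≤ K) :
    ∃ c C : ℝ, 0 < c ∧ c ≤ C ∧
      ∀ (n : ℕ) (a p : ℝ), K ∣ n → 4 ≤ n / K → 0 < a → 0 < p → p ≤ 1 →
        c * n * a * p ^ 3 ≤
            (3 * a * p * ((((n / K : ℕ) : ℝ) - 2) * p ^ 2 +
              ((K : ℝ) - 1) * ((n / K : ℕ) : ℝ) * p ^ 2 * (1 - lam) ^ 2)) -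
            (3 * a * p * (1 - lam) * (2 * (((n / K : ℕ) : ℝ) - 1) * p ^ 2 * (1 - lam) +
              ((K : ℝ) - 2) * ((n / K : ℕ) : ℝ) * p ^ 2 * (1 - lam) ^ 2)) ∧
          (3 * a * p * ((((n / K : ℕ) : ℝ) - 2) * p ^ 2 +
              ((K : ℝ) - 1) * ((n / K : ℕ) : ℝ) * p ^ 2 * (1 - lam) ^ 2)) -
            (3 * a * p * (1 - lam) * (2 * (((n / K : ℕ) : ℝ) - 1) * p ^ 2 * (1 - lam) +
              ((K : ℝ) - 2) * ((n / K : ℕ) : ℝ) * p ^ 2 * (1 - lam) ^ 2)) ≤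
          C * n * a * p ^ 3 := by
  have hK0 : (0 : ℝ) < K := by positivity
  refine ⟨3 * lam * (2 - lam) / (2 * K), 3 * (K + 3) / K, ?_, ?_, ?_⟩
  · have : 0 < 2 - lam := by linarith
    positivity
  · rw [div_le_div_iff₀ (by positivity) hK0]
    nlinarith [sq_nonneg (1 - lam), hK0]
  · intro n a p hdvd hm4 ha hp hp1
    set m : ℝ := ((n / K : ℕ) : ℝ) with hm
    have hn : (n : ℝ) = K * m := by
      have h := Nat.div_mul_cancel hdvd
      have := congrArg (fun x : ℕ => (x : ℝ)) h
      push_cast at this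
      linarith [this]
    have hm4' : (4 : ℝ) ≤ m := by rw [hm]; exact_mod_cast hm4
    have hK2 : (2 : ℝ) ≤ K := by exact_mod_cast hK
    have hap : 0 < a * p ^ 3 := by positivity
    set μ : ℝ := 1 - lam with hmu
    clear_value μ
    clear_value m
    have hμ0 : 0 < μ := by simp [hmu]; linarith
    have hμ1 : μ < 1 := by simp [hmu]; linarith
    have hB : (3 * a * p * ((m - 2) * p ^ 2 + ((K : ℝ) - 1) * m * p ^ 2 * μ ^ 2)) -
        (3 * a * p * μ * (2 * (m - 1) * p ^ 2 * μ +
          ((K : ℝ) - 2) * m * p ^ 2 * μ ^ 2)) =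
        3 * ((m - 2) * (1 - μ ^ 2) + ((K : ℝ) - 2) * m * μ ^ 2 * (1 - μ)) * (a * p ^ 3) := by
      ring
    have hfac : (0 : ℝ) ≤ 1 - μ ^ 2 := by nlinarith
    have hnn : (0 : ℝ) ≤ ((K : ℝ) - 2) * m * μ ^ 2 * (1 - μ) :=
      mul_nonneg (mul_nonneg (mul_nonneg (by linarith) (by linarith)) (sq_nonneg μ))
        (by linarith)
    constructor
    · rw [hn]
      have key : 3 * lam * (2 - lam) / (2 * K) * (K * m) ≤
          3 * ((m - 2) * (1 - μ ^ 2) + ((K : ℝ) - 2) * m * μ ^ 2 * (1 - μ)) := by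
        have h1 : 3 * lam * (2 - lam) / (2 * K) * (K * m) = 3 / 2 * m * (1 - μ ^ 2) := by
          rw [hmu]; field_simp; ring
        rw [h1]
        have e : 3 * ((m - 2) * (1 - μ ^ 2) + ((K : ℝ) - 2) * m * μ ^ 2 * (1 - μ)) -
            3 / 2 * m * (1 - μ ^ 2) = 3 * ((m / 2 - 2) * (1 - μ ^ 2)) +
            3 * (((K : ℝ) - 2) * m * μ ^ 2 * (1 - μ)) := by ring
        have h2 : (0:ℝ) ≤ (m / 2 - 2) * (1 - μ ^ 2) :=
          mul_nonneg (by linarith) hfac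
        linarith
      calc 3 * lam * (2 - lam) / (2 * K) * (K * m) * a * p ^ 3
          = (3 * lam * (2 - lam) / (2 * K) * (K * m)) * (a * p ^ 3) := by ring
        _ ≤ (3 * ((m - 2) * (1 - μ ^ 2) + ((K : ℝ) - 2) * m * μ ^ 2 * (1 - μ))) * (a * p ^ 3) :=
            mul_le_mul_of_nonneg_right key hap.le
        _ = _ := hB.symm
    · rw [hn]
      have key : 3 * ((m - 2) * (1 - μ ^ 2) + ((K : ℝ) - 2) * m * μ ^ 2 * (1 - μ)) ≤
          3 * (K + 3) / K * (K * m) := by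
        have h1 : 3 * ((K : ℝ) + 3) / K * (K * m) = 3 * (K + 3) * m := by
          field_simp
        rw [h1]
        have b1 : (m - 2) * (1 - μ ^ 2) ≤ m := by
          nlinarith [mul_nonneg (by linarith : (0:ℝ) ≤ m - 2) (sq_nonneg μ)]
        have b2 : ((K : ℝ) - 2) * m * μ ^ 2 * (1 - μ) ≤ ((K : ℝ) - 2) * m := by
          have h3 : (0:ℝ) ≤ 1 - μ ^ 2 * (1 - μ) := by nlinarith [sq_nonneg μ]
          have h4 : (0:ℝ) ≤ ((K : ℝ) - 2) * m :=
            mul_nonneg (by linarith) (by linarith)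
          nlinarith [mul_nonneg h4 h3]
        have e : 3 * ((K : ℝ) + 3) * m - 3 * (m + ((K : ℝ) - 2) * m) = 12 * m := by ring
        linarith
      calc 3 * a * p * ((m - 2) * p ^ 2 + ((K : ℝ) - 1) * m * p ^ 2 * μ ^ 2) -
            3 * a * p * μ * (2 * (m - 1) * p ^ 2 * μ + ((K : ℝ) - 2) * m * p ^ 2 * μ ^ 2)
          = (3 * ((m - 2) * (1 - μ ^ 2) + ((K : ℝ) - 2) * m * μ ^ 2 * (1 - μ))) * (a * p ^ 3) :=
            hB
        _ ≤ (3 * (K + 3) / K * (K * m)) * (a * p ^ 3) :=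
            mul_le_mul_of_nonneg_right key hap.le
        _ = 3 * (K + 3) / K * (K * m) * a * p ^ 3 := by ring
end
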